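/- arXiv:0802.2920 — 2 statements merged into one kernel-verified Lean document; each statement's English description precedes it below -/
import Mathlib

section
/- Let (A,B) be a normalized integral table algebra with no nontrivial basis elements of degree 1 or 2, and let b_3 ∈ B be an element of degree 3 with b_3·b̄_3 = 1 + b_8 for some b_8 ∈ B of degree 8. Then for any t_3 ∈ B of degree 3 one has (b_3 t_3, b_3 t_3) ≤ 2, and for any s_4 ∈ B of degree 4 one has (b_3 s_4, b_3 s_4) ≤ 2. Moreover, if (b_3 t_3, b_3 t_3) = 2 then t_3·t̄_3 = 1 + b_8. -/
/-!
Since `(x, yz) = (x ȳ, z)`, one has `(b₃t, b₃t) = (b₃b̄₃, t t̄) = 1 + c`, where `c` is the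
coefficient of `b₈` in `t t̄`. All coefficients of `t t̄` are nonnegative, its coefficient of `1`
is `1`, and `deg (t t̄) = (deg t)²`; comparing degrees gives `1 + 8c ≤ (deg t)² ≤ 16`, so the
integer `c` is at most `1`. If `deg t = 3` and `c = 1`, then `1 + 8c = 9` exhausts the degree,
so every other coefficient vanishes and `t t̄ = 1 + b₈`.
-/

/-- A normalized table algebra datum on a commutative `ℂ`-algebra `A`:
a distinguished basis `B` containing `1`, an involutive algebra
endomorphism `bar` permuting `B`, a bilinear form for which `B` is
orthonormal and which satisfies `(a, bc) = (a·b̄, c)`, nonnegative real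
structure constants, and a degree homomorphism positive on `B`. -/
structure TAData (A : Type) [CommRing A] [Algebra ℂ A] : Type where
  B : Finset A
  one_mem : (1 : A) ∈ B
  indep : LinearIndependent ℂ (fun b : {x : A // x ∈ B} => (b : A))
  span_top : Submodule.span ℂ (B : Set A) = ⊤
  bar : A →ₐ[ℂ] A
  bar_bar : ∀ a : A, bar (bar a) = a
  bar_mem : ∀ b ∈ B, bar b ∈ B
  ip : A →ₗ[ℂ] A →ₗ[ℂ] ℂ
  ip_symm : ∀ a b : A, ip a b = ip b a
  ip_self : ∀ b ∈ B, ip b b = 1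
  ip_ne : ∀ b ∈ B, ∀ c ∈ B, b ≠ c → ip b c = 0
  ip_assoc : ∀ a b c : A, ip a (b * c) = ip (a * bar b) c
  struct_nonneg : ∀ b ∈ B, ∀ c ∈ B, ∀ d ∈ B, ∃ r : ℝ, 0 ≤ r ∧ ip (b * c) d = (r : ℂ)
  deg : A →ₐ[ℂ] ℂ
  deg_pos : ∀ b ∈ B, ∃ r : ℝ, 0 < r ∧ deg b = (r : ℂ)

namespace TAData

variable {A : Type} [CommRing A] [Algebra ℂ A]

/-- Integrality (making a table algebra a NITA): all structure constants are
nonnegative integers and all degrees are positive integers. -/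
def Integral (T : TAData A) : Prop :=
  (∀ b ∈ T.B, ∀ c ∈ T.B, ∀ d ∈ T.B, ∃ n : ℕ, T.ip (b * c) d = (n : ℂ)) ∧
  (∀ b ∈ T.B, ∃ n : ℕ, 0 < n ∧ T.deg b = (n : ℂ))

/-- `L₁(B) = {1}` and `L₂(B) = ∅`: no nontrivial basis elements of degree 1 or 2. -/
def NoSmall (T : TAData A) : Prop :=
  (∀ b ∈ T.B, T.deg b = 1 → b = 1) ∧ (∀ b ∈ T.B, T.deg b ≠ 2)

/-- The table algebra is generated (as an algebra) by `b` (and its conjugate). -/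
def GeneratedBy (T : TAData A) (b : A) : Prop :=
  Algebra.adjoin ℂ ({b, T.bar b} : Set A) = ⊤

/-- A table subset of `B`: contains `1`, closed under the involution and under
supports of products. -/
def IsTableSubset (T : TAData A) (C : Set A) : Prop :=
  C ⊆ ↑T.B ∧ (1 : A) ∈ C ∧ (∀ b ∈ C, T.bar b ∈ C) ∧
    ∀ b ∈ C, ∀ c ∈ C, ∀ d ∈ T.B, T.ip (b * c) d ≠ 0 → d ∈ C

end TAData

open scoped ComplexOrder

namespace TAData

variable {A : Type} [CommRing A] [Algebra ℂ A] (T : TAData A)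

theorem ip_mul_left_bar (b c d : A) : T.ip (b * c) d = T.ip (T.bar b * d) c := by
  rw [T.ip_symm, T.ip_assoc, mul_comm d]

theorem ip_mul_self (a t : A) : T.ip (a * t) (a * t) = T.ip (a * T.bar a) (t * T.bar t) := by
  rw [T.ip_assoc, mul_right_comm, mul_comm t, T.ip_assoc, T.bar_bar]

theorem ip_one_mul_bar {t : A} (ht : t ∈ T.B) : T.ip 1 (t * T.bar t) = 1 := by
  rw [T.ip_assoc, one_mul, T.ip_self _ (T.bar_mem t ht)]

theorem eq_sum_ip_smul (x : A) : x = ∑ d ∈ T.B, T.ip x d • d := by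
  have hx : x ∈ Submodule.span ℂ (T.B : Set A) := by rw [T.span_top]; trivial
  obtain ⟨f, -, hf⟩ := Submodule.mem_span_finset.mp hx
  have hcoef : ∀ c ∈ T.B, T.ip x c = f c := by
    intro c hc
    rw [← hf, map_sum, LinearMap.sum_apply, Finset.sum_eq_single c]
    · rw [map_smul, LinearMap.smul_apply, T.ip_self c hc, smul_eq_mul, mul_one]
    · intro b hb hbc
      rw [map_smul, LinearMap.smul_apply, T.ip_ne b hb c hc hbc, smul_zero]
    · exact fun h => absurd hc h
  conv_lhs => rw [← hf]
  exact Finset.sum_congr rfl fun d hd => by rw [hcoef d hd]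

theorem deg_eq_sum (x : A) : T.deg x = ∑ d ∈ T.B, T.ip x d * T.deg d := by
  conv_lhs => rw [T.eq_sum_ip_smul x]
  simp only [map_sum, map_smul, smul_eq_mul]

theorem deg_pos_of_mem {b : A} (hb : b ∈ T.B) : 0 < T.deg b := by
  obtain ⟨r, hr, h⟩ := T.deg_pos b hb
  rw [h]
  exact_mod_cast hr

theorem ip_mul_nonneg {b c d : A} (hb : b ∈ T.B) (hc : c ∈ T.B) (hd : d ∈ T.B) :
    0 ≤ T.ip (b * c) d := by
  obtain ⟨r, hr, h⟩ := T.struct_nonneg b hb c hc d hd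
  rw [h]
  exact_mod_cast hr

-- Both sides times `∑ c, deg c ^ 2` equal `∑ c, deg c * deg (x * c)`, by moving `x` across `ip`.
theorem deg_bar (x : A) : T.deg (T.bar x) = T.deg x := by
  have hS : 0 < ∑ c ∈ T.B, T.deg c * T.deg c :=
    Finset.sum_pos (fun c hc => mul_pos (T.deg_pos_of_mem hc) (T.deg_pos_of_mem hc))
      ⟨1, T.one_mem⟩
  have key : ∑ c ∈ T.B, T.deg c * T.deg (x * c)
      = ∑ d ∈ T.B, T.deg (T.bar x * d) * T.deg d := by
    simp_rw [T.deg_eq_sum (x * _), T.deg_eq_sum (T.bar x * _), Finset.mul_sum, Finset.sum_mul,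
      T.ip_mul_left_bar x]
    rw [Finset.sum_comm]
    exact Finset.sum_congr rfl fun _ _ => Finset.sum_congr rfl fun _ _ => by ring
  simp only [map_mul] at key
  refine mul_right_cancel₀ hS.ne' ?_
  calc T.deg (T.bar x) * ∑ c ∈ T.B, T.deg c * T.deg c
      = ∑ d ∈ T.B, T.deg (T.bar x) * T.deg d * T.deg d := by
        rw [Finset.mul_sum]; simp only [mul_assoc]
    _ = ∑ c ∈ T.B, T.deg c * (T.deg x * T.deg c) := key.symm
    _ = T.deg x * ∑ c ∈ T.B, T.deg c * T.deg c := by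
        rw [Finset.mul_sum]; exact Finset.sum_congr rfl fun _ _ => by ring

theorem deg_mul_bar (x : A) : T.deg (x * T.bar x) = T.deg x ^ 2 := by
  rw [map_mul, T.deg_bar, sq]

theorem ne_one_of_deg_ne_one {e : A} (h : T.deg e ≠ 1) : e ≠ 1 := by
  rintro rfl
  exact h (map_one _)

theorem sum_ip_mul_deg_le {b c : A} (hb : b ∈ T.B) (hc : c ∈ T.B) {S : Finset A}
    (hS : S ⊆ T.B) : ∑ d ∈ S, T.ip (b * c) d * T.deg d ≤ T.deg (b * c) := by
  rw [T.deg_eq_sum (b * c)]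
  exact Finset.sum_le_sum_of_subset_of_nonneg hS fun d hd _ =>
    mul_nonneg (T.ip_mul_nonneg hb hc hd) (T.deg_pos_of_mem hd).le

theorem eq_sum_of_sum_ip_mul_deg_eq {b c : A} (hb : b ∈ T.B) (hc : c ∈ T.B) {S : Finset A}
    (hS : S ⊆ T.B) (h : ∑ d ∈ S, T.ip (b * c) d * T.deg d = T.deg (b * c)) :
    b * c = ∑ d ∈ S, T.ip (b * c) d • d := by
  classical
  have hsplit := Finset.sum_sdiff hS (f := fun d => T.ip (b * c) d * T.deg d)
  rw [← T.deg_eq_sum] at hsplit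
  have hrest : ∑ d ∈ T.B \ S, T.ip (b * c) d * T.deg d = 0 := by
    linear_combination hsplit - h
  have hvanish : ∀ d ∈ T.B, d ∉ S → T.ip (b * c) d = 0 := by
    intro d hd hdS
    have hterm := (Finset.sum_eq_zero_iff_of_nonneg fun d hd =>
      mul_nonneg (T.ip_mul_nonneg hb hc (Finset.mem_sdiff.mp hd).1)
        (T.deg_pos_of_mem (Finset.mem_sdiff.mp hd).1).le).mp hrest d
      (Finset.mem_sdiff.mpr ⟨hd, hdS⟩)
    exact (mul_eq_zero.mp hterm).resolve_right (T.deg_pos_of_mem hd).ne'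
  conv_lhs => rw [T.eq_sum_ip_smul (b * c)]
  exact (Finset.sum_subset hS fun d hd hdS => by rw [hvanish d hd hdS, zero_smul]).symm

theorem ip_mul_self_eq_one_add {a e t : A} (hae : a * T.bar a = 1 + e) (ht : t ∈ T.B) :
    T.ip (a * t) (a * t) = 1 + T.ip (t * T.bar t) e := by
  rw [T.ip_mul_self, hae, map_add, LinearMap.add_apply, T.ip_one_mul_bar ht, T.ip_symm]

theorem sum_pair_ip_mul_bar_mul_deg [DecidableEq A] {e t : A} (he1 : e ≠ 1) (ht : t ∈ T.B) :
    ∑ d ∈ {1, e}, T.ip (t * T.bar t) d * T.deg d = 1 + T.ip (t * T.bar t) e * T.deg e := by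
  rw [Finset.sum_pair he1.symm, T.ip_symm _ 1, T.ip_one_mul_bar ht, map_one, mul_one]

theorem one_add_ip_mul_bar_mul_deg_le {e t : A} (he : e ∈ T.B) (he1 : e ≠ 1) (ht : t ∈ T.B) :
    1 + T.ip (t * T.bar t) e * T.deg e ≤ T.deg t ^ 2 := by
  classical
  have h := T.sum_ip_mul_deg_le ht (T.bar_mem t ht)
    (Finset.insert_subset T.one_mem (Finset.singleton_subset_iff.mpr he))
  rwa [T.sum_pair_ip_mul_bar_mul_deg he1 ht, T.deg_mul_bar] at h

theorem mul_bar_eq_of_one_add_ip_mul_deg_eq {e t : A} (he : e ∈ T.B) (he1 : e ≠ 1)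
    (ht : t ∈ T.B) (h : 1 + T.ip (t * T.bar t) e * T.deg e = T.deg t ^ 2) :
    t * T.bar t = 1 + T.ip (t * T.bar t) e • e := by
  classical
  rw [← T.sum_pair_ip_mul_bar_mul_deg he1 ht, ← T.deg_mul_bar] at h
  have := T.eq_sum_of_sum_ip_mul_deg_eq ht (T.bar_mem t ht)
    (Finset.insert_subset T.one_mem (Finset.singleton_subset_iff.mpr he)) h
  rwa [Finset.sum_pair he1.symm, T.ip_symm _ 1, T.ip_one_mul_bar ht, one_smul] at this

theorem exists_nat_ip_mul_bar_le_one (hInt : T.Integral) {e t : A} (he : e ∈ T.B)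
    (hde : T.deg e = 8) (ht : t ∈ T.B) (hdt : T.deg t ≤ 4) :
    ∃ n : ℕ, T.ip (t * T.bar t) e = n ∧ n ≤ 1 := by
  obtain ⟨n, hn⟩ := hInt.1 t ht _ (T.bar_mem t ht) e he
  have hle := T.one_add_ip_mul_bar_mul_deg_le he (T.ne_one_of_deg_ne_one (by norm_num [hde])) ht
  have h16 : T.deg t ^ 2 ≤ 4 ^ 2 := pow_le_pow_left₀ (T.deg_pos_of_mem ht).le hdt 2
  rw [hn, hde] at hle
  have hn16 : 1 + n * 8 ≤ 4 ^ 2 := by exact_mod_cast hle.trans h16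
  exact ⟨n, hn, by omega⟩

end TAData

theorem stmt_1_general {A : Type} [CommRing A] [Algebra ℂ A] (T : TAData A)
    (hInt : T.Integral)
    (b3 b8 : A)
    (hb8 : b8 ∈ T.B) (hd8 : T.deg b8 = 8)
    (hmul : b3 * T.bar b3 = 1 + b8) :
    (∀ t3 ∈ T.B, T.deg t3 = 3 →
      ∃ k : ℕ, T.ip (b3 * t3) (b3 * t3) = (k : ℂ) ∧ k ≤ 2) ∧
    (∀ s4 ∈ T.B, T.deg s4 = 4 →
      ∃ k : ℕ, T.ip (b3 * s4) (b3 * s4) = (k : ℂ) ∧ k ≤ 2) ∧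
    (∀ t3 ∈ T.B, T.deg t3 = 3 → T.ip (b3 * t3) (b3 * t3) = 2 →
      t3 * T.bar t3 = 1 + b8) := by
  have hbound : ∀ t ∈ T.B, T.deg t ≤ 4 →
      ∃ k : ℕ, T.ip (b3 * t) (b3 * t) = (k : ℂ) ∧ k ≤ 2 := by
    intro t ht hdt
    obtain ⟨n, hn, hn1⟩ := T.exists_nat_ip_mul_bar_le_one hInt hb8 hd8 ht hdt
    refine ⟨1 + n, ?_, by omega⟩
    rw [T.ip_mul_self_eq_one_add hmul ht, hn, Nat.cast_add, Nat.cast_one]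
  refine ⟨fun t ht hdt => hbound t ht (by rw [hdt]; norm_num),
    fun s hs hds => hbound s hs hds.le, ?_⟩
  intro t ht hdt h2
  have hc : T.ip (t * T.bar t) b8 = 1 := by
    rw [T.ip_mul_self_eq_one_add hmul ht] at h2
    linear_combination h2
  have hb81 : b8 ≠ 1 := T.ne_one_of_deg_ne_one (by norm_num [hd8])
  have := T.mul_bar_eq_of_one_add_ip_mul_deg_eq hb8 hb81 ht (by rw [hc, hd8, hdt]; norm_num)
  rwa [hc, one_smul] at this

/-- Lemma 2.2: bounds on `(b₃t₃, b₃t₃)` and `(b₃s₄, b₃s₄)`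
in a NITA with `b₃·b̄₃ = 1 + b₈`. -/
theorem stmt_1 {A : Type} [CommRing A] [Algebra ℂ A] (T : TAData A)
    (hInt : T.Integral) (hSmall : T.NoSmall)
    (b3 b8 : A) (hb3 : b3 ∈ T.B) (hd3 : T.deg b3 = 3)
    (hb8 : b8 ∈ T.B) (hd8 : T.deg b8 = 8)
    (hmul : b3 * T.bar b3 = 1 + b8) :
    (∀ t3 ∈ T.B, T.deg t3 = 3 →
      ∃ k : ℕ, T.ip (b3 * t3) (b3 * t3) = (k : ℂ) ∧ k ≤ 2) ∧
    (∀ s4 ∈ T.B, T.deg s4 = 4 →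
      ∃ k : ℕ, T.ip (b3 * s4) (b3 * s4) = (k : ℂ) ∧ k ≤ 2) ∧
    (∀ t3 ∈ T.B, T.deg t3 = 3 → T.ip (b3 * t3) (b3 * t3) = 2 →
      t3 * T.bar t3 = 1 + b8) :=
  stmt_1_general T hInt b3 b8 hb8 hd8 hmul
end

section
/- There is no NITA (A,B) generated by a non-real element b_3 of degree 3 with no nontrivial basis elements of degree 1 or 2 such that b_3·b̄_3 = 1 + b_8, b_3² equals either b̄_3 + b_6 or c_3 + b_6 (with b_6 ∈ B of degree 6, c_3 ∈ B of degree 3, c_3 ∉ {b_3, b̄_3}), and (b_3·b_8, b_3·b_8) = 2. -/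
namespace TAData

variable {A : Type} [CommRing A] [Algebra ℂ A]

def HasNatCoeffs (T : TAData A) (z : A) : Prop :=
  ∃ N : A → ℕ, ∀ d ∈ T.B, T.ip z d = N d

theorem Integral.hasNatCoeffs_mul {T : TAData A} (hInt : T.Integral) {b c : A}
    (hb : b ∈ T.B) (hc : c ∈ T.B) : T.HasNatCoeffs (b * c) := by
  classical
  choose N hN using hInt.1 b hb c hc
  refine ⟨fun d => if hd : d ∈ T.B then N d hd else 0, fun d hd => ?_⟩
  simp only [dif_pos hd]
  exact hN d hd

variable (T : TAData A)

theorem sum_ip_smul (z : A) : ∑ d ∈ T.B, T.ip z d • d = z := by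
  have hz : z ∈ Submodule.span ℂ (T.B : Set A) := T.span_top ▸ Submodule.mem_top
  induction hz using Submodule.span_induction with
  | mem b hb =>
    rw [Finset.sum_eq_single_of_mem b hb fun d hd hdb => by
      rw [T.ip_ne b hb d hd (Ne.symm hdb), zero_smul]]
    rw [T.ip_self b hb, one_smul]
  | zero => simp
  | add x y _ _ ihx ihy =>
    simp only [map_add, LinearMap.add_apply, add_smul, Finset.sum_add_distrib, ihx, ihy]
  | smul c x _ ih =>
    simp only [map_smul, LinearMap.smul_apply, smul_assoc, ← Finset.smul_sum, ih]

theorem eq_of_ip_eq {w w' : A} (h : ∀ d ∈ T.B, T.ip w d = T.ip w' d) : w = w' := by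
  rw [← T.sum_ip_smul w, ← T.sum_ip_smul w']
  exact Finset.sum_congr rfl fun d hd => by rw [h d hd]

theorem ip_eq_sum_mul (z w : A) : T.ip z w = ∑ d ∈ T.B, T.ip z d * T.ip w d := by
  conv_lhs => rw [← T.sum_ip_smul w]
  simp only [map_sum, map_smul, smul_eq_mul, mul_comm]

theorem ip_mul_left (a c d : A) : T.ip (a * c) d = T.ip c (T.bar a * d) := by
  rw [T.ip_symm, T.ip_assoc, T.ip_symm, mul_comm]

theorem ip_self_add {b c : A} (hb : b ∈ T.B) (hc : c ∈ T.B) (hbc : b ≠ c) :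
    T.ip b (b + c) = 1 := by
  rw [map_add, T.ip_self b hb, T.ip_ne b hb c hc hbc, add_zero]

theorem mem_of_ip_self_eq_one {w : A} (hw : T.HasNatCoeffs w) (hww : T.ip w w = 1) :
    w ∈ T.B := by
  obtain ⟨N, hN⟩ := hw
  have hsum : ∑ d ∈ T.B, N d ^ 2 = 1 := by
    have : ((∑ d ∈ T.B, N d ^ 2 : ℕ) : ℂ) = 1 := by
      rw [← hww, T.ip_eq_sum_mul]
      push_cast
      exact Finset.sum_congr rfl fun d hd => by rw [hN d hd, sq]
    exact_mod_cast this
  obtain ⟨x, hx, hNx⟩ := Finset.exists_ne_zero_of_sum_ne_zero (hsum ▸ one_ne_zero)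
  have hNx_pos : 0 < N x := Nat.pos_of_ne_zero fun h => hNx (by simp [h])
  have hNx_one : N x = 1 := by
    have : N x ^ 2 ≤ 1 :=
      hsum ▸ Finset.single_le_sum (f := fun d => N d ^ 2) (fun d _ => Nat.zero_le _) hx
    nlinarith
  have hN_zero : ∀ d ∈ T.B, d ≠ x → N d = 0 := fun d hd hdx => by
    have := hsum ▸ Finset.add_le_sum (fun d _ => Nat.zero_le (N d ^ 2)) hx hd hdx.symm
    rw [hNx_one] at this
    simpa using this
  convert hx
  refine T.eq_of_ip_eq fun d hd => ?_
  by_cases hdx : d = x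
  · rw [hdx, hN x hx, hNx_one, T.ip_self x hx, Nat.cast_one]
  · rw [hN d hd, hN_zero d hd hdx, T.ip_ne x hx d hd (Ne.symm hdx), Nat.cast_zero]

theorem exists_eq_add_of_ip_self_eq_two {z b : A} (hz : T.HasNatCoeffs z) (hb : b ∈ T.B)
    (hzb : T.ip z b = 1) (hzz : T.ip z z = 2) : ∃ x ∈ T.B, x ≠ b ∧ z = b + x := by
  classical
  obtain ⟨N, hN⟩ := hz
  have hcoeff : ∀ d ∈ T.B, T.ip (z - b) d = Function.update N b 0 d := fun d hd => by
    rw [map_sub, LinearMap.sub_apply]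
    by_cases hdb : d = b
    · subst hdb
      rw [hzb, T.ip_self d hd, Function.update_self, Nat.cast_zero, sub_self]
    · rw [Function.update_of_ne hdb, hN d hd, T.ip_ne b hb d hd (Ne.symm hdb), sub_zero]
  have hnorm : T.ip (z - b) (z - b) = 1 := by
    simp only [map_sub, LinearMap.sub_apply]
    rw [T.ip_symm b z, hzz, hzb, T.ip_self b hb]
    norm_num
  refine ⟨z - b, T.mem_of_ip_self_eq_one ⟨_, hcoeff⟩ hnorm, fun h => ?_, by abel⟩
  have := hcoeff b hb
  rw [h, T.ip_self b hb, Function.update_self, Nat.cast_zero] at this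
  exact one_ne_zero this

theorem ip_eq_zero_of_add_eq {u v w : A} (hu : T.HasNatCoeffs u)
    (hv : T.HasNatCoeffs v) (huv : u + v = w) {d : A} (hd : d ∈ T.B) (hwd : T.ip w d = 0) :
    T.ip u d = 0 := by
  obtain ⟨Nu, hNu⟩ := hu
  obtain ⟨Nv, hNv⟩ := hv
  rw [← huv, map_add, LinearMap.add_apply, hNu d hd, hNv d hd] at hwd
  have h : Nu d + Nv d = 0 := by exact_mod_cast hwd
  rw [hNu d hd, (Nat.add_eq_zero_iff.1 h).1, Nat.cast_zero]

theorem eq_of_add_eq_add_add {u v b x : A} (hu : T.HasNatCoeffs u) (hv : T.HasNatCoeffs v)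
    (hb : b ∈ T.B) (hx : x ∈ T.B) (hxb : x ≠ b) (huv : u + v = b + (b + x))
    (hub : T.ip u b = 1) (hux : T.ip u x = 0) : u = b := by
  refine T.eq_of_ip_eq fun d hd => ?_
  by_cases hdb : d = b
  · rw [hdb, hub, T.ip_self b hb]
  by_cases hdx : d = x
  · rw [hdx, hux, T.ip_ne b hb x hx hxb.symm]
  rw [T.ip_ne b hb d hd (Ne.symm hdb)]
  refine T.ip_eq_zero_of_add_eq hu hv huv hd ?_
  simp only [map_add, LinearMap.add_apply, T.ip_ne b hb d hd (Ne.symm hdb),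
    T.ip_ne x hx d hd (Ne.symm hdx), add_zero]

theorem eq_or_eq_of_add_eq_add_add {u v b x : A} (hu : T.HasNatCoeffs u)
    (hv : T.HasNatCoeffs v) (hb : b ∈ T.B) (hx : x ∈ T.B) (hxb : x ≠ b)
    (huv : u + v = b + (b + x)) (hub : T.ip u b = 1) (hvb : T.ip v b = 1) : u = b ∨ v = b := by
  have hsum : T.ip u x + T.ip v x = 1 := by
    rw [← LinearMap.add_apply, ← map_add, huv]
    simp only [map_add, LinearMap.add_apply, T.ip_ne b hb x hx hxb.symm, T.ip_self x hx, zero_add]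
  obtain ⟨Nu, hNu⟩ := hu
  obtain ⟨Nv, hNv⟩ := hv
  rw [hNu x hx, hNv x hx] at hsum
  rcases Nat.add_eq_one_iff.1 (by exact_mod_cast hsum) with ⟨hNux, -⟩ | ⟨-, hNvx⟩
  · left
    exact T.eq_of_add_eq_add_add ⟨Nu, hNu⟩ ⟨Nv, hNv⟩ hb hx hxb huv hub
      (by rw [hNu x hx, hNux, Nat.cast_zero])
  · right
    exact T.eq_of_add_eq_add_add ⟨Nv, hNv⟩ ⟨Nu, hNu⟩ hb hx hxb (add_comm v u ▸ huv) hvb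
      (by rw [hNv x hx, hNvx, Nat.cast_zero])

end TAData

theorem stmt_5_general {A : Type} [CommRing A] [Algebra ℂ A] (T : TAData A)
    (hInt : T.Integral)
    (b3 b8 b6 : A)
    (hb3 : b3 ∈ T.B) (hd3 : T.deg b3 = 3)
    (hb8 : b8 ∈ T.B) (hd8 : T.deg b8 = 8)
    (hmul : b3 * T.bar b3 = 1 + b8)
    (hb6 : b6 ∈ T.B) (hd6 : T.deg b6 = 6)
    (hsq : b3 * b3 = T.bar b3 + b6 ∨
      ∃ c3 ∈ T.B, T.deg c3 = 3 ∧ c3 ≠ b3 ∧ c3 ≠ T.bar b3 ∧ b3 * b3 = c3 + b6)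
    (hip : T.ip (b3 * b8) (b3 * b8) = 2) : False := by
  have hbar : T.bar b3 ∈ T.B := T.bar_mem b3 hb3
  have hd3' : T.deg (T.bar b3) = 3 := by
    have := congrArg T.deg hmul
    rw [map_mul, map_add, map_one, hd3, hd8] at this
    linear_combination this / 3
  obtain ⟨e, he, hde, hsq⟩ : ∃ e ∈ T.B, T.deg e = 3 ∧ b3 * b3 = e + b6 := by
    rcases hsq with h | ⟨c3, hc3, hdc3, -, -, h⟩
    exacts [⟨_, hbar, hd3', h⟩, ⟨c3, hc3, hdc3, h⟩]
  have hb8_ne : b8 ≠ 1 := fun h => by simpa [hd8] using congrArg T.deg h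
  have he_ne : e ≠ b6 := fun h => by norm_num [← h, hde] at hd6
  have hb3b8 : T.ip (b3 * b8) b3 = 1 := by
    rw [T.ip_mul_left, mul_comm, hmul, add_comm, T.ip_self_add hb8 T.one_mem hb8_ne]
  obtain ⟨x, hx, hxb, hprod⟩ := T.exists_eq_add_of_ip_self_eq_two
    (hInt.hasNatCoeffs_mul hb3 hb8) hb3 hb3b8 hip
  have huv : T.bar b3 * e + T.bar b3 * b6 = b3 + (b3 + x) := by
    linear_combination (-T.bar b3) * hsq + b3 * hmul + hprod
  have hcoeff : ∀ c, T.ip (T.bar b3 * c) b3 = T.ip c (e + b6) := fun c => by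
    rw [T.ip_mul_left, T.bar_bar, hsq]
  rcases T.eq_or_eq_of_add_eq_add_add (hInt.hasNatCoeffs_mul hbar he)
      (hInt.hasNatCoeffs_mul hbar hb6) hb3 hx hxb huv
      (by rw [hcoeff, T.ip_self_add he hb6 he_ne])
      (by rw [hcoeff, add_comm, T.ip_self_add hb6 he he_ne.symm]) with h | h
  · have := congrArg T.deg h
    norm_num [hd3', hde, hd3] at this
  · have := congrArg T.deg h
    norm_num [hd3', hd6, hd3] at this

/-- Theorem 4.1: there is no NITA generated by a non-real `b₃` of
degree 3, without nontrivial basis elements of degree 1 or 2, with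
`b₃·b̄₃ = 1 + b₈`, `b₃²` equal to `b̄₃ + b₆` or to `c₃ + b₆`
(`c₃ ∉ {b₃, b̄₃}`), and `(b₃b₈, b₃b₈) = 2`. -/
theorem stmt_5 {A : Type} [CommRing A] [Algebra ℂ A] (T : TAData A)
    (hInt : T.Integral) (hSmall : T.NoSmall)
    (b3 b8 b6 : A)
    (hb3 : b3 ∈ T.B) (hd3 : T.deg b3 = 3) (hnr : T.bar b3 ≠ b3)
    (hgen : T.GeneratedBy b3)
    (hb8 : b8 ∈ T.B) (hd8 : T.deg b8 = 8)
    (hmul : b3 * T.bar b3 = 1 + b8)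
    (hb6 : b6 ∈ T.B) (hd6 : T.deg b6 = 6)
    (hsq : b3 * b3 = T.bar b3 + b6 ∨
      ∃ c3 ∈ T.B, T.deg c3 = 3 ∧ c3 ≠ b3 ∧ c3 ≠ T.bar b3 ∧ b3 * b3 = c3 + b6)
    (hip : T.ip (b3 * b8) (b3 * b8) = 2) : False :=
  stmt_5_general T hInt b3 b8 b6 hb3 hd3 hb8 hd8 hmul hb6 hd6 hsq hip
end
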